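/- arXiv:1410.4018 — 2 statements merged into one kernel-verified Lean document; each statement's English description precedes it below -/
import Mathlib

section
/- Let K be a field and let 0 → A → V → B → 0 be a short exact sequence of finite-dimensional K-vector spaces, with injective linear map f : A → V, surjective linear map g : V → B, and range f = ker g. Let a = (a_i)_{i ∈ ι} be a basis of A, b = (b_j)_{j ∈ κ} a basis of B (ι, κ finite index types), let c be a basis of V indexed by ι ⊕ κ, and let s, s' : B → V be two linear sections of g (g ∘ s = id_B and g ∘ s' = id_B). Then the determinant with respect to c of the family (f(a_i), s(b_j))_{ι ⊕ κ} equals the determinant with respect to c of the family (f(a_i), s'(b_j))_{ι ⊕ κ}. -/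
/-!
Two sections of `g` differ by a map into `ker g = range f`, so each `s' (b j)` is `s (b j)` plus
a linear combination of the vectors `f (a i)`. In coordinates with respect to `c` this is right
multiplication by a block unitriangular matrix, which has determinant `1`.
-/

open Module Submodule

theorem Module.Basis.det_sumElim_eq_of_sub_mem_span {R M ι κ : Type*} [CommRing R]
    [AddCommGroup M] [Module R M] [Fintype ι] [Fintype κ] [DecidableEq ι] [DecidableEq κ]
    (c : Basis (ι ⊕ κ) R M) (u : ι → M) (w w' : κ → M)
    (h : ∀ j, w' j - w j ∈ span R (Set.range u)) :
    c.det (Sum.elim u w') = c.det (Sum.elim u w) := by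
  choose D hD using fun j => (mem_span_range_iff_exists_fun R).1 (h j)
  have hw' : ∀ j, w' j = w j + ∑ i, D j i • u i := fun j => by rw [hD j]; abel
  have hmat : c.toMatrix (Sum.elim u w') =
      c.toMatrix (Sum.elim u w) * Matrix.fromBlocks 1 (Matrix.of fun i j => D j i) 0 1 := by
    ext k (i | j)
    · simp [Matrix.mul_apply, Basis.toMatrix_apply, Matrix.one_apply]
    · simp [Matrix.mul_apply, Basis.toMatrix_apply, Matrix.one_apply, hw', mul_comm, add_comm]
  rw [c.det_apply, c.det_apply, hmat, Matrix.det_mul, Matrix.det_fromBlocks_zero₂₁]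
  simp

theorem LinearMap.range_eq_span_basis {R M N ι : Type*} [Semiring R] [AddCommMonoid M]
    [Module R M] [AddCommMonoid N] [Module R N] (f : M →ₗ[R] N) (a : Basis ι R M) :
    LinearMap.range f = span R (Set.range fun i => f (a i)) := by
  rw [← Function.comp_def, Set.range_comp, span_image, a.span_eq, Submodule.map_top]

theorem LinearMap.sub_mem_ker_of_comp_eq_id {R M N : Type*} [Ring R] [AddCommGroup M]
    [Module R M] [AddCommGroup N] [Module R N] {g : M →ₗ[R] N} {s s' : N →ₗ[R] M}
    (hs : g ∘ₗ s = LinearMap.id) (hs' : g ∘ₗ s' = LinearMap.id) (x : N) :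
    s' x - s x ∈ LinearMap.ker g := by
  simp [LinearMap.mem_ker, ← LinearMap.comp_apply, hs, hs']

theorem sesDetSectionIndependent_general {K : Type*} [Field K] {A V B : Type*}
    [AddCommGroup A] [Module K A] [AddCommGroup V] [Module K V]
    [AddCommGroup B] [Module K B]
    {ι κ : Type*} [Fintype ι] [Fintype κ] [DecidableEq ι] [DecidableEq κ]
    (f : A →ₗ[K] V) (g : V →ₗ[K] B)
    (hfg : LinearMap.range f = LinearMap.ker g)
    (a : Module.Basis ι K A) (b : Module.Basis κ K B) (c : Module.Basis (ι ⊕ κ) K V)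
    (s s' : B →ₗ[K] V) (hs : g ∘ₗ s = LinearMap.id)
    (hs' : g ∘ₗ s' = LinearMap.id) :
    c.det (Sum.elim (fun i => f (a i)) (fun j => s (b j))) =
      c.det (Sum.elim (fun i => f (a i)) (fun j => s' (b j))) := by
  refine (c.det_sumElim_eq_of_sub_mem_span _ _ _ fun j => ?_).symm
  rw [← f.range_eq_span_basis a, hfg]
  exact LinearMap.sub_mem_ker_of_comp_eq_id hs hs' (b j)

/-- In a short exact sequence `0 → A → V → B → 0` of finite-dimensional based
vector spaces, the determinant (with respect to a basis `c` of `V`) of the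
family `(f (a i))ᵢ ∪ (s (b j))ⱼ` is independent of the choice of the linear
section `s` of `g`. -/
theorem sesDetSectionIndependent {K : Type*} [Field K] {A V B : Type*}
    [AddCommGroup A] [Module K A] [AddCommGroup V] [Module K V]
    [AddCommGroup B] [Module K B]
    [FiniteDimensional K A] [FiniteDimensional K V] [FiniteDimensional K B]
    {ι κ : Type*} [Fintype ι] [Fintype κ] [DecidableEq ι] [DecidableEq κ]
    (f : A →ₗ[K] V) (g : V →ₗ[K] B)
    (hf : Function.Injective f) (hg : Function.Surjective g)
    (hfg : LinearMap.range f = LinearMap.ker g)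
    (a : Module.Basis ι K A) (b : Module.Basis κ K B) (c : Module.Basis (ι ⊕ κ) K V)
    (s s' : B →ₗ[K] V) (hs : g ∘ₗ s = LinearMap.id)
    (hs' : g ∘ₗ s' = LinearMap.id) :
    c.det (Sum.elim (fun i => f (a i)) (fun j => s (b j))) =
      c.det (Sum.elim (fun i => f (a i)) (fun j => s' (b j))) :=
  sesDetSectionIndependent_general f g hfg a b c s s' hs hs'
end

section
/- Let g, g', b, b', n, d be natural numbers with n ≥ 1 and d ≥ 3. Assume (as integers) that 2 − 2g − b < 0, that d·b' = n·b, and that 2 − 2g' − b' = n·(2 − 2g − b). Then g' ≥ 1. -/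
/-- Euler characteristic computation: if `2 - 2g - b < 0`, `d·b' = n·b`,
`2 - 2g' - b' = n·(2 - 2g - b)` with `n ≥ 1` and `d ≥ 3`, then `g' ≥ 1`. -/
theorem positive_genus (g g' b b' n d : ℕ) (hn : 1 ≤ n) (hd : 3 ≤ d)
    (hneg : (2 : ℤ) - 2 * g - b < 0)
    (hbd : (d : ℤ) * b' = n * b)
    (heuler : (2 : ℤ) - 2 * g' - b' = n * (2 - 2 * g - b)) :
    1 ≤ g' := by
  by_contra h
  have hg' : g' = 0 := by omega
  subst hg'
  push_cast at heuler
  have hn' : (1 : ℤ) ≤ n := by exact_mod_cast hn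
  have hd' : (3 : ℤ) ≤ d := by exact_mod_cast hd
  have hb' : (0 : ℤ) ≤ b' := Int.ofNat_nonneg b'
  have hb : (0 : ℤ) ≤ b := Int.ofNat_nonneg b
  have hg : (0 : ℤ) ≤ g := Int.ofNat_nonneg g
  have key : (2:ℤ)*d = 2*n*d - 2*n*d*g - n*b*(d-1) := by
    linear_combination (d:ℤ) * heuler + hbd
  rcases eq_or_lt_of_le hg with hg0 | hg1
  · have hb3 : (3 : ℤ) ≤ b := by omega
    have h1 : (n:ℤ)*(d-1)*3 ≤ n*(d-1)*b :=
      mul_le_mul_of_nonneg_left hb3 (by nlinarith)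
    have h2 : (0:ℤ) ≤ n*(d-3) := mul_nonneg (by linarith) (by linarith)
    nlinarith [h1, h2]
  · have hg1' : (1:ℤ) ≤ g := by omega
    have h1 : (n:ℤ)*d*1 ≤ n*d*g :=
      mul_le_mul_of_nonneg_left hg1' (by nlinarith)
    have h2 : (0:ℤ) ≤ n*b*(d-1) :=
      mul_nonneg (mul_nonneg (by linarith) hb) (by linarith)
    nlinarith [h1, h2]
end
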